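/- arXiv:2006.11283 — 2 statements merged into one kernel-verified Lean document; each statement's English description precedes it below -/
import Mathlib

section
/- Let z_1,...,z_n ∈ [0,1] and let w_1,...,w_n ≥ 0. The function Z ↦ Σ_{k=1}^n w_k·(1 - ∏_{k'=1}^k (1 - z_{k'})) is monotone nondecreasing in each coordinate z_j, and the set function S ↦ Σ_{k=1}^n w_k·𝟙(S ∩ {1,...,k} ≠ ∅) (obtained for binary z with support S) is monotone and submodular on subsets of {1,...,n}. -/
/-- The set-function form of the caching gain:
`G(S) = Σₖ wₖ·𝟙(S ∩ {1,...,k} ≠ ∅)`. -/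
def cachingGainSet {n : ℕ} (w : Fin n → ℝ) (S : Finset (Fin n)) : ℝ :=
  ∑ k, w k * (if (S ∩ Finset.Iic k).Nonempty then (1 : ℝ) else 0)

/-!
Each summand is a nonnegative weight times a monotone term: `1 - ∏ (1 - z)` grows with `z` while
the factors stay in `[0,1]`, and its binary form is the indicator that `S` meets the prefix
`{1,…,k}`. That indicator is submodular: adding `j` raises it exactly when `j` lies in the prefix
and `S` misses it, which gets rarer as `S` grows.
-/

open Finset

theorem Finset.prod_one_sub_le_prod_one_sub {ι : Type*} (s : Finset ι) {z z' : ι → ℝ}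
    (hle : z ≤ z') (hz' : ∀ i, z' i ≤ 1) :
    ∏ i ∈ s, (1 - z' i) ≤ ∏ i ∈ s, (1 - z i) :=
  prod_le_prod (fun i _ => sub_nonneg.2 (hz' i)) (fun i _ => sub_le_sub_left (hle i) 1)

section Meets

variable {α : Type*} [DecidableEq α] (A : Finset α)

def meetsIndicator (S : Finset α) : ℝ :=
  if (S ∩ A).Nonempty then 1 else 0

variable {A}

theorem meetsIndicator_mono {S T : Finset α} (hST : S ⊆ T) :
    meetsIndicator A S ≤ meetsIndicator A T := by
  unfold meetsIndicator
  split_ifs with hS hT <;> norm_num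
  exact hT (hS.mono (inter_subset_inter_right hST))

theorem meetsIndicator_insert_sub_le {S T : Finset α} (hST : S ⊆ T) (j : α) :
    meetsIndicator A (insert j T) - meetsIndicator A T
      ≤ meetsIndicator A (insert j S) - meetsIndicator A S := by
  by_cases hj : j ∈ A
  · have meets_insert (U : Finset α) : meetsIndicator A (insert j U) = 1 :=
      if_pos ⟨j, mem_inter.2 ⟨mem_insert_self j U, hj⟩⟩
    rw [meets_insert, meets_insert]
    linarith [meetsIndicator_mono (A := A) hST]
  · simp only [meetsIndicator, insert_inter_of_notMem hj, sub_self, le_refl]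

end Meets

section CachingGain

variable {n : ℕ} {w : Fin n → ℝ}

theorem cachingGainSet_eq_sum_meetsIndicator (S : Finset (Fin n)) :
    cachingGainSet w S = ∑ k, w k * meetsIndicator (Iic k) S :=
  rfl

theorem cachingGainSet_mono (hw : ∀ k, 0 ≤ w k) {S T : Finset (Fin n)} (hST : S ⊆ T) :
    cachingGainSet w S ≤ cachingGainSet w T := by
  simp only [cachingGainSet_eq_sum_meetsIndicator]
  exact sum_le_sum fun k _ => mul_le_mul_of_nonneg_left (meetsIndicator_mono hST) (hw k)

theorem cachingGainSet_insert_sub_le (hw : ∀ k, 0 ≤ w k) {S T : Finset (Fin n)} (hST : S ⊆ T)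
    (j : Fin n) :
    cachingGainSet w (insert j T) - cachingGainSet w T
      ≤ cachingGainSet w (insert j S) - cachingGainSet w S := by
  simp only [cachingGainSet_eq_sum_meetsIndicator, ← sum_sub_distrib, ← mul_sub]
  exact sum_le_sum fun k _ =>
    mul_le_mul_of_nonneg_left (meetsIndicator_insert_sub_le hST j) (hw k)

end CachingGain

/-- The caching gain `F(z) = Σₖ wₖ·(1 - ∏_{k'≤k}(1 - z_{k'}))` is monotone
nondecreasing in each coordinate on `[0,1]ⁿ`, and its set-function form is monotone
and submodular. -/
theorem caching_gain_monotone_submodular (n : ℕ) (w : Fin n → ℝ) (hw : ∀ k, 0 ≤ w k) :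
    (∀ z z' : Fin n → ℝ, (∀ i, z i ∈ Set.Icc (0 : ℝ) 1) →
      (∀ i, z' i ∈ Set.Icc (0 : ℝ) 1) → z ≤ z' →
      ∑ k, w k * (1 - ∏ k' ∈ Finset.Iic k, (1 - z k'))
        ≤ ∑ k, w k * (1 - ∏ k' ∈ Finset.Iic k, (1 - z' k'))) ∧
    (∀ S T : Finset (Fin n), S ⊆ T → cachingGainSet w S ≤ cachingGainSet w T) ∧
    (∀ S T : Finset (Fin n), S ⊆ T → ∀ j ∉ T,
      cachingGainSet w (insert j T) - cachingGainSet w T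
        ≤ cachingGainSet w (insert j S) - cachingGainSet w S) := by
  refine ⟨fun z z' _ hz' hle => ?_, fun S T => cachingGainSet_mono hw,
    fun S T hST j _ => cachingGainSet_insert_sub_le hw hST j⟩
  exact sum_le_sum fun k _ => mul_le_mul_of_nonneg_left
    (sub_le_sub_left (prod_one_sub_le_prod_one_sub _ hle fun i => (hz' i).2) 1) (hw k)
end

section
/- Let Z_1,...,Z_k be negatively associated {0,1}-valued random variables and define F(Z) = Σ_{j=1}^k w_j·(1 - ∏_{j'=1}^j (1 - Z_{j'})) with w_j ≥ 0. Then E[F(Z)] ≥ Σ_{j=1}^k w_j·(1 - ∏_{j'=1}^j (1 - E[Z_{j'}])), i.e., the expected caching gain under negatively associated placement is at least the gain of the deterministic relaxation evaluated at the marginal probabilities. -/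
/-!
Since `1 - Z_j` is a decreasing function of `Z_j`, negative association applied to the
two disjoint blocks `S` and `{a}` gives `E[∏_{S ∪ {a}} (1 - Z)] ≤ E[∏_S (1 - Z)] · (1 - E[Z_a])`,
so by induction `E[∏_{j' ≤ j} (1 - Z_{j'})] ≤ ∏_{j' ≤ j} (1 - E[Z_{j'}])` for every `j`.
The theorem follows termwise by linearity of expectation and `w_j ≥ 0`.
-/

open MeasureTheory

/-- Negative association (Joag-Dev and Proschan). -/
def NegAssoc {Ω : Type*} [MeasurableSpace Ω] (μ : Measure Ω) {n : ℕ}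
    (Z : Fin n → Ω → ℝ) : Prop :=
  ∀ I J : Finset (Fin n), Disjoint I J →
    ∀ f g : (Fin n → ℝ) → ℝ, Monotone f → Monotone g →
      (∀ x y : Fin n → ℝ, (∀ i ∈ I, x i = y i) → f x = f y) →
      (∀ x y : Fin n → ℝ, (∀ j ∈ J, x j = y j) → g x = g y) →
      (∃ C, ∀ x, |f x| ≤ C) → (∃ C, ∀ x, |g x| ≤ C) →
      ∫ ω, f (fun i => Z i ω) * g (fun i => Z i ω) ∂μ
        ≤ (∫ ω, f (fun i => Z i ω) ∂μ) * ∫ ω, g (fun i => Z i ω) ∂μ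

open Finset

theorem prod_one_sub_mem_Icc {ι : Type*} {S : Finset ι} {t : ι → ℝ}
    (ht : ∀ i ∈ S, t i ∈ Set.Icc (0 : ℝ) 1) : ∏ i ∈ S, (1 - t i) ∈ Set.Icc (0 : ℝ) 1 :=
  ⟨prod_nonneg fun i hi => sub_nonneg.2 (ht i hi).2,
    prod_le_one (fun i hi => sub_nonneg.2 (ht i hi).2) fun i hi => by linarith [(ht i hi).1]⟩

/-- Clamping each `x_i` to `[0, 1]` turns `∏_{i ∈ S} (1 - x_i)` into a bounded antitone function
on all of `ℝ^ι`, as negative association requires, without changing it on `[0, 1]^ι`. -/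
noncomputable def prodOneSubClamp {ι : Type*} (S : Finset ι) (x : ι → ℝ) : ℝ :=
  ∏ i ∈ S, (1 - (Set.projIcc 0 1 zero_le_one (x i) : ℝ))

section prodOneSubClamp

variable {ι : Type*} (S : Finset ι)

theorem prodOneSubClamp_mem_Icc (x : ι → ℝ) : prodOneSubClamp S x ∈ Set.Icc (0 : ℝ) 1 :=
  prod_one_sub_mem_Icc (t := fun i => (Set.projIcc (0 : ℝ) 1 zero_le_one (x i) : ℝ)) fun i _ =>
    (Set.projIcc 0 1 zero_le_one (x i)).2

theorem abs_prodOneSubClamp_le_one (x : ι → ℝ) : |prodOneSubClamp S x| ≤ 1 := by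
  obtain ⟨h0, h1⟩ := prodOneSubClamp_mem_Icc S x
  rwa [abs_of_nonneg h0]

theorem antitone_prodOneSubClamp : Antitone (prodOneSubClamp S) := fun _ y hxy =>
  prod_le_prod (fun i _ => sub_nonneg.2 (Set.projIcc 0 1 zero_le_one (y i)).2.2)
    fun i _ => sub_le_sub_left (Subtype.mono_coe _ (Set.monotone_projIcc zero_le_one (hxy i))) 1

theorem prodOneSubClamp_congr {x y : ι → ℝ} (hxy : ∀ i ∈ S, x i = y i) :
    prodOneSubClamp S x = prodOneSubClamp S y :=
  prod_congr rfl fun i hi => by rw [hxy i hi]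

theorem prodOneSubClamp_of_mem_Icc {x : ι → ℝ} (hx : ∀ i, x i ∈ Set.Icc (0 : ℝ) 1) :
    prodOneSubClamp S x = ∏ i ∈ S, (1 - x i) :=
  prod_congr rfl fun i _ => by rw [Set.projIcc_of_mem _ (hx i)]

end prodOneSubClamp

section UnitInterval

variable {Ω ι : Type*} [MeasurableSpace Ω] {μ : Measure Ω} [IsFiniteMeasure μ]
  {Z : ι → Ω → ℝ}

theorem integrable_of_mem_Icc {X : Ω → ℝ} (hX : Measurable X)
    (hX01 : ∀ ω, X ω ∈ Set.Icc (0 : ℝ) 1) : Integrable X μ :=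
  .of_bound hX.aestronglyMeasurable 1 <| ae_of_all _ fun ω => by
    rw [Real.norm_of_nonneg (hX01 ω).1]
    exact (hX01 ω).2

theorem integrable_prod_one_sub (hmeas : ∀ j, Measurable (Z j))
    (hZ : ∀ j ω, Z j ω ∈ Set.Icc (0 : ℝ) 1) (S : Finset ι) :
    Integrable (fun ω => ∏ j ∈ S, (1 - Z j ω)) μ :=
  integrable_of_mem_Icc (measurable_prod _ fun j _ => measurable_const.sub (hmeas j))
    fun ω => prod_one_sub_mem_Icc fun j _ => hZ j ω

theorem integral_le_one_of_mem_Icc [IsProbabilityMeasure μ] {X : Ω → ℝ} (hX : Measurable X)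
    (hX01 : ∀ ω, X ω ∈ Set.Icc (0 : ℝ) 1) : ∫ ω, X ω ∂μ ≤ 1 := by
  calc ∫ ω, X ω ∂μ ≤ ∫ _, (1 : ℝ) ∂μ :=
        integral_mono (integrable_of_mem_Icc hX hX01) (integrable_const 1) fun ω => (hX01 ω).2
    _ = 1 := by simp

end UnitInterval

namespace NegAssoc

variable {Ω : Type*} [MeasurableSpace Ω] {μ : Measure Ω} {n : ℕ} {Z : Fin n → Ω → ℝ}

theorem integral_mul_le_of_antitone (hNA : NegAssoc μ Z) {I J : Finset (Fin n)}
    (hIJ : Disjoint I J) {f g : (Fin n → ℝ) → ℝ} (hf : Antitone f) (hg : Antitone g)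
    (hfI : ∀ x y : Fin n → ℝ, (∀ i ∈ I, x i = y i) → f x = f y)
    (hgJ : ∀ x y : Fin n → ℝ, (∀ j ∈ J, x j = y j) → g x = g y)
    (hfC : ∃ C, ∀ x, |f x| ≤ C) (hgC : ∃ C, ∀ x, |g x| ≤ C) :
    ∫ ω, f (fun i => Z i ω) * g (fun i => Z i ω) ∂μ
      ≤ (∫ ω, f (fun i => Z i ω) ∂μ) * ∫ ω, g (fun i => Z i ω) ∂μ := by
  have h := hNA I J hIJ (fun x => -f x) (fun x => -g x) hf.neg hg.neg
    (fun x y hxy => by rw [hfI x y hxy]) (fun x y hxy => by rw [hgJ x y hxy])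
    (hfC.imp fun C hC x => by rw [abs_neg]; exact hC x)
    (hgC.imp fun C hC x => by rw [abs_neg]; exact hC x)
  simpa only [neg_mul_neg, integral_neg] using h

theorem integral_prodOneSubClamp_mul_le (hNA : NegAssoc μ Z) {I J : Finset (Fin n)}
    (hIJ : Disjoint I J) :
    ∫ ω, prodOneSubClamp I (fun i => Z i ω) * prodOneSubClamp J (fun i => Z i ω) ∂μ
      ≤ (∫ ω, prodOneSubClamp I (fun i => Z i ω) ∂μ)
        * ∫ ω, prodOneSubClamp J (fun i => Z i ω) ∂μ :=
  hNA.integral_mul_le_of_antitone hIJ (antitone_prodOneSubClamp I) (antitone_prodOneSubClamp J)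
    (fun _ _ => prodOneSubClamp_congr I) (fun _ _ => prodOneSubClamp_congr J)
    ⟨1, abs_prodOneSubClamp_le_one I⟩ ⟨1, abs_prodOneSubClamp_le_one J⟩

variable [IsProbabilityMeasure μ] (hNA : NegAssoc μ Z) (hmeas : ∀ j, Measurable (Z j))
  (hZ : ∀ j ω, Z j ω ∈ Set.Icc (0 : ℝ) 1)
include hNA hmeas hZ

theorem integral_prod_one_sub_insert_le {a : Fin n} {S : Finset (Fin n)} (ha : a ∉ S) :
    ∫ ω, ∏ j ∈ insert a S, (1 - Z j ω) ∂μ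
      ≤ (∫ ω, ∏ j ∈ S, (1 - Z j ω) ∂μ) * (1 - ∫ ω, Z a ω ∂μ) := by
  have hblock := hNA.integral_prodOneSubClamp_mul_le (disjoint_singleton_right.2 ha)
  simp only [prodOneSubClamp_of_mem_Icc _ (hZ · _), prod_singleton] at hblock
  rw [integral_sub (integrable_const 1) (integrable_of_mem_Icc (hmeas a) (hZ a))] at hblock
  simpa only [prod_insert ha, mul_comm, integral_const, probReal_univ, one_smul] using hblock

theorem integral_prod_one_sub_le (S : Finset (Fin n)) :
    ∫ ω, ∏ j ∈ S, (1 - Z j ω) ∂μ ≤ ∏ j ∈ S, (1 - ∫ ω, Z j ω ∂μ) := by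
  classical
  induction S using Finset.induction_on with
  | empty => simp
  | insert a S ha ih =>
    have h1a : 0 ≤ 1 - ∫ ω, Z a ω ∂μ := sub_nonneg.2 (integral_le_one_of_mem_Icc (hmeas a) (hZ a))
    calc ∫ ω, ∏ j ∈ insert a S, (1 - Z j ω) ∂μ
        ≤ (∫ ω, ∏ j ∈ S, (1 - Z j ω) ∂μ) * (1 - ∫ ω, Z a ω ∂μ) :=
          hNA.integral_prod_one_sub_insert_le hmeas hZ ha
      _ ≤ (∏ j ∈ S, (1 - ∫ ω, Z j ω ∂μ)) * (1 - ∫ ω, Z a ω ∂μ) :=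
          mul_le_mul_of_nonneg_right ih h1a
      _ = ∏ j ∈ insert a S, (1 - ∫ ω, Z j ω ∂μ) := by rw [prod_insert ha, mul_comm]

end NegAssoc

/-- For negatively associated `{0,1}`-valued placement variables, the expected caching
gain `E[F(Z)] = E[Σⱼ wⱼ·(1 - ∏_{j'≤j}(1 - Z_{j'}))]` is at least the gain of the
deterministic relaxation evaluated at the marginal probabilities. -/
theorem expected_caching_gain_ge_relaxation {Ω : Type*} [MeasurableSpace Ω]
    (μ : Measure Ω) [IsProbabilityMeasure μ] {k : ℕ} (Z : Fin k → Ω → ℝ)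
    (w : Fin k → ℝ) (hw : ∀ j, 0 ≤ w j)
    (hmeas : ∀ j, Measurable (Z j))
    (hbool : ∀ j ω, Z j ω = 0 ∨ Z j ω = 1)
    (hNA : NegAssoc μ Z) :
    ∑ j, w j * (1 - ∏ j' ∈ Finset.Iic j, (1 - ∫ ω, Z j' ω ∂μ))
      ≤ ∫ ω, ∑ j, w j * (1 - ∏ j' ∈ Finset.Iic j, (1 - Z j' ω)) ∂μ := by
  have hZ : ∀ j ω, Z j ω ∈ Set.Icc (0 : ℝ) 1 := fun j ω => by
    rcases hbool j ω with h | h <;> simp [h]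
  have hint := integrable_prod_one_sub (μ := μ) hmeas hZ
  have hterm : ∀ j, Integrable (fun ω => w j * (1 - ∏ j' ∈ Iic j, (1 - Z j' ω))) μ :=
    fun j => ((integrable_const 1).sub (hint _)).const_mul (w j)
  rw [integral_finsetSum _ fun j _ => hterm j]
  refine sum_le_sum fun j _ => ?_
  rw [integral_const_mul, integral_sub (integrable_const 1) (hint _), integral_const,
    probReal_univ, one_smul]
  gcongr
  · exact hw j
  · exact hNA.integral_prod_one_sub_le hmeas hZ _
end
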